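/- Suppose B ≥ 0 is such that p_Ψ(x) ≤ B for all x ∈ ℝⁿ, and let Ω ⊆ ℝⁿ be a bounded set with diameter at most D. Then sup_{x, y ∈ Ω} |d_λ(x, y) − ‖x − y‖| ≤ max(p₀, B) · D / λ; in particular, d_λ(x, y) converges to ‖x − y‖ as λ → ∞ uniformly over x, y ∈ Ω. -/

import Mathlib

open MeasureTheory Set Filter

/-- The conformal factor `f_λ(x) := (p₀ + λ)/(p_Ψ(x) + λ)`. -/
noncomputable def fconf {n : ℕ} (p₀ lam : ℝ) (pPsi : EuclideanSpace ℝ (Fin n) → ℝ)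
    (x : EuclideanSpace ℝ (Fin n)) : ℝ :=
  (p₀ + lam) / (pPsi x + lam)

/-- The generative length of a path `γ : [0,1] → ℝⁿ`,
`L_λ(γ) := ∫₀¹ f_λ(γ(t)) ⬝ ‖γ'(t)‖ dt`. -/
noncomputable def genLength {n : ℕ} (p₀ lam : ℝ) (pPsi : EuclideanSpace ℝ (Fin n) → ℝ)
    (γ : ℝ → EuclideanSpace ℝ (Fin n)) : ℝ :=
  ∫ t in (0:ℝ)..1, fconf p₀ lam pPsi (γ t) * ‖deriv γ t‖

/-- The generative distance `d_λ(x,y)`: the infimum of `L_λ(γ)` over all C¹ paths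
`γ` with `γ 0 = x` and `γ 1 = y`. -/
noncomputable def genDist {n : ℕ} (p₀ lam : ℝ) (pPsi : EuclideanSpace ℝ (Fin n) → ℝ)
    (x y : EuclideanSpace ℝ (Fin n)) : ℝ :=
  sInf {L : ℝ | ∃ γ : ℝ → EuclideanSpace ℝ (Fin n),
    ContDiff ℝ 1 γ ∧ γ 0 = x ∧ γ 1 = y ∧ genLength p₀ lam pPsi γ = L}

/-! Since `0 ≤ p_Ψ ≤ B`, the conformal factor is pinched between `(p₀ + λ)/(B + λ)` and
`(p₀ + λ)/λ`. The upper bound along the straight segment gives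
`d_λ(x, y) ≤ (1 + p₀/λ) ‖x - y‖`; the lower bound together with `‖γ 1 - γ 0‖ ≤ ∫ ‖γ'‖` gives
`d_λ(x, y) ≥ (1 - B/(B + λ)) ‖x - y‖ ≥ (1 - B/λ) ‖x - y‖`. -/

lemma norm_sub_le_integral_norm_deriv {E : Type*} [NormedAddCommGroup E] [NormedSpace ℝ E]
    {γ : ℝ → E} (hγ : ContDiff ℝ 1 γ) :
    ‖γ 1 - γ 0‖ ≤ ∫ t in (0:ℝ)..1, ‖deriv γ t‖ :=
  norm_sub_le_integral_of_norm_deriv_le_of_le zero_le_one hγ.continuous.continuousOn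
    (hγ.differentiable one_ne_zero).differentiableOn (ae_of_all _ fun _ _ ↦ le_rfl)
    ((hγ.continuous_deriv le_rfl).norm.intervalIntegrable _ _)

section GenerativeDistance

variable {n : ℕ} {p₀ lam : ℝ} {pPsi : EuclideanSpace ℝ (Fin n) → ℝ}

lemma fconf_le_div (hp : 0 ≤ p₀ + lam) (hlam : 0 < lam) {x : EuclideanSpace ℝ (Fin n)}
    (hx : 0 ≤ pPsi x) : fconf p₀ lam pPsi x ≤ (p₀ + lam) / lam :=
  div_le_div_of_nonneg_left hp hlam (by linarith)

lemma div_le_fconf (hp : 0 ≤ p₀ + lam) {B : ℝ} {x : EuclideanSpace ℝ (Fin n)}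
    (hpos : 0 < pPsi x + lam) (hx : pPsi x ≤ B) :
    (p₀ + lam) / (B + lam) ≤ fconf p₀ lam pPsi x :=
  div_le_div_of_nonneg_left hp hpos (by linarith)

lemma continuous_fconf (hcont : Continuous pPsi) (hpos : ∀ x, 0 < pPsi x + lam) :
    Continuous (fconf p₀ lam pPsi) :=
  continuous_const.div (hcont.add continuous_const) fun x ↦ (hpos x).ne'

variable {γ : ℝ → EuclideanSpace ℝ (Fin n)}

lemma intervalIntegrable_fconf_mul_norm_deriv (hf : Continuous (fconf p₀ lam pPsi))
    (hγ : ContDiff ℝ 1 γ) :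
    IntervalIntegrable (fun t ↦ fconf p₀ lam pPsi (γ t) * ‖deriv γ t‖) volume 0 1 :=
  ((hf.comp hγ.continuous).mul (hγ.continuous_deriv le_rfl).norm).intervalIntegrable _ _

lemma genLength_le_mul_integral_norm_deriv (hf : Continuous (fconf p₀ lam pPsi))
    (hγ : ContDiff ℝ 1 γ) {C : ℝ} (hC : ∀ t, fconf p₀ lam pPsi (γ t) ≤ C) :
    genLength p₀ lam pPsi γ ≤ C * ∫ t in (0:ℝ)..1, ‖deriv γ t‖ := by
  rw [← intervalIntegral.integral_const_mul]
  exact intervalIntegral.integral_mono_on zero_le_one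
    (intervalIntegrable_fconf_mul_norm_deriv hf hγ)
    (((hγ.continuous_deriv le_rfl).norm.const_mul C).intervalIntegrable _ _)
    fun t _ ↦ mul_le_mul_of_nonneg_right (hC t) (norm_nonneg _)

lemma mul_integral_norm_deriv_le_genLength (hf : Continuous (fconf p₀ lam pPsi))
    (hγ : ContDiff ℝ 1 γ) {c : ℝ} (hc : ∀ t, c ≤ fconf p₀ lam pPsi (γ t)) :
    c * ∫ t in (0:ℝ)..1, ‖deriv γ t‖ ≤ genLength p₀ lam pPsi γ := by
  rw [← intervalIntegral.integral_const_mul]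
  exact intervalIntegral.integral_mono_on zero_le_one
    (((hγ.continuous_deriv le_rfl).norm.const_mul c).intervalIntegrable _ _)
    (intervalIntegrable_fconf_mul_norm_deriv hf hγ)
    fun t _ ↦ mul_le_mul_of_nonneg_right (hc t) (norm_nonneg _)

lemma genLength_nonneg (hp : 0 ≤ p₀ + lam) (hpos : ∀ x, 0 < pPsi x + lam) :
    0 ≤ genLength p₀ lam pPsi γ :=
  intervalIntegral.integral_nonneg zero_le_one fun _ _ ↦
    mul_nonneg (div_nonneg hp (hpos _).le) (norm_nonneg _)

lemma genLength_lineMap_le (hf : Continuous (fconf p₀ lam pPsi)) (hp : 0 ≤ p₀ + lam)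
    (hlam : 0 < lam) (hnonneg : ∀ x, 0 ≤ pPsi x) (x y : EuclideanSpace ℝ (Fin n)) :
    genLength p₀ lam pPsi (AffineMap.lineMap x y) ≤ (p₀ + lam) / lam * ‖x - y‖ := by
  calc genLength p₀ lam pPsi (AffineMap.lineMap x y)
      ≤ (p₀ + lam) / lam * ∫ t in (0:ℝ)..1, ‖deriv (AffineMap.lineMap x y) t‖ :=
        genLength_le_mul_integral_norm_deriv hf (AffineMap.contDiff_lineMap x y)
          fun _ ↦ fconf_le_div hp hlam (hnonneg _)
    _ = (p₀ + lam) / lam * ‖x - y‖ := by simp [norm_sub_rev]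

lemma mul_norm_sub_le_genLength (hf : Continuous (fconf p₀ lam pPsi)) (hp : 0 ≤ p₀ + lam)
    (hpos : ∀ x, 0 < pPsi x + lam) {B : ℝ} (hbd : ∀ x, pPsi x ≤ B) (hγ : ContDiff ℝ 1 γ) :
    (p₀ + lam) / (B + lam) * ‖γ 1 - γ 0‖ ≤ genLength p₀ lam pPsi γ :=
  have hB : 0 ≤ B + lam := by linarith [hpos (γ 0), hbd (γ 0)]
  (mul_le_mul_of_nonneg_left (norm_sub_le_integral_norm_deriv hγ) (div_nonneg hp hB)).trans
    (mul_integral_norm_deriv_le_genLength hf hγ fun _ ↦ div_le_fconf hp (hpos _) (hbd _))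

lemma genDist_le_genLength (hp : 0 ≤ p₀ + lam) (hpos : ∀ x, 0 < pPsi x + lam)
    (hγ : ContDiff ℝ 1 γ) :
    genDist p₀ lam pPsi (γ 0) (γ 1) ≤ genLength p₀ lam pPsi γ :=
  csInf_le ⟨0, by rintro _ ⟨γ, -, -, -, rfl⟩; exact genLength_nonneg hp hpos⟩ ⟨γ, hγ, rfl, rfl, rfl⟩

lemma le_genDist {x y : EuclideanSpace ℝ (Fin n)} {a : ℝ}
    (h : ∀ γ, ContDiff ℝ 1 γ → γ 0 = x → γ 1 = y → a ≤ genLength p₀ lam pPsi γ) :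
    a ≤ genDist p₀ lam pPsi x y :=
  le_csInf ⟨_, AffineMap.lineMap x y, AffineMap.contDiff_lineMap x y, by simp, by simp, rfl⟩
    fun _ ⟨γ, hγ, h0, h1, hL⟩ ↦ hL ▸ h γ hγ h0 h1

lemma genDist_le (hcont : Continuous pPsi) (hnonneg : ∀ x, 0 ≤ pPsi x) (hp : 0 ≤ p₀)
    (hlam : 0 < lam) (x y : EuclideanSpace ℝ (Fin n)) :
    genDist p₀ lam pPsi x y ≤ (p₀ + lam) / lam * ‖x - y‖ := by
  have hpos : ∀ x, 0 < pPsi x + lam := fun x ↦ by linarith [hnonneg x]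
  have hline := genDist_le_genLength (p₀ := p₀) (by linarith) hpos (AffineMap.contDiff_lineMap x y)
  rw [AffineMap.lineMap_apply_zero, AffineMap.lineMap_apply_one] at hline
  exact hline.trans
    (genLength_lineMap_le (continuous_fconf hcont hpos) (by linarith) hlam hnonneg x y)

lemma div_mul_norm_sub_le_genDist (hcont : Continuous pPsi) (hnonneg : ∀ x, 0 ≤ pPsi x)
    (hp : 0 ≤ p₀) (hlam : 0 < lam) {B : ℝ} (hbd : ∀ x, pPsi x ≤ B)
    (x y : EuclideanSpace ℝ (Fin n)) :
    (p₀ + lam) / (B + lam) * ‖x - y‖ ≤ genDist p₀ lam pPsi x y := by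
  have hpos : ∀ x, 0 < pPsi x + lam := fun x ↦ by linarith [hnonneg x]
  refine le_genDist fun γ hγ h0 h1 ↦ ?_
  rw [← h0, ← h1, norm_sub_rev]
  exact mul_norm_sub_le_genLength (continuous_fconf hcont hpos) (by linarith) hpos hbd hγ

theorem abs_genDist_sub_norm_le (hcont : Continuous pPsi) (hnonneg : ∀ x, 0 ≤ pPsi x)
    (hp : 0 ≤ p₀) (hlam : 0 < lam) {B : ℝ} (hbd : ∀ x, pPsi x ≤ B)
    (x y : EuclideanSpace ℝ (Fin n)) :
    |genDist p₀ lam pPsi x y - ‖x - y‖| ≤ max p₀ B * ‖x - y‖ / lam := by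
  have hB : 0 ≤ B := (hnonneg 0).trans (hbd 0)
  rw [abs_sub_le_iff, sub_le_iff_le_add', sub_le_comm]
  constructor
  · calc genDist p₀ lam pPsi x y
        ≤ (p₀ + lam) / lam * ‖x - y‖ := genDist_le hcont hnonneg hp hlam x y
      _ = ‖x - y‖ + p₀ * ‖x - y‖ / lam := by field_simp; ring
      _ ≤ ‖x - y‖ + max p₀ B * ‖x - y‖ / lam := by gcongr; exact le_max_left _ _
  · calc ‖x - y‖ - max p₀ B * ‖x - y‖ / lam
        ≤ ‖x - y‖ - B * ‖x - y‖ / (B + lam) := by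
          gcongr
          · exact le_max_right _ _
          · linarith
      _ = lam / (B + lam) * ‖x - y‖ := by field_simp; ring
      _ ≤ (p₀ + lam) / (B + lam) * ‖x - y‖ := by gcongr; linarith
      _ ≤ genDist p₀ lam pPsi x y := div_mul_norm_sub_le_genDist hcont hnonneg hp hlam hbd x y

end GenerativeDistance

theorem genDist_tendsto_euclidean_uniform_general {n : ℕ}
    (p₀ : ℝ) (hp₀ : 0 < p₀)
    (pPsi : EuclideanSpace ℝ (Fin n) → ℝ) (hcont : Continuous pPsi)
    (hnonneg : ∀ x, 0 ≤ pPsi x)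
    (B : ℝ) (hbd : ∀ x, pPsi x ≤ B)
    (Ω : Set (EuclideanSpace ℝ (Fin n)))
    (D : ℝ) (hD : ∀ x ∈ Ω, ∀ y ∈ Ω, ‖x - y‖ ≤ D) :
    (∀ lam : ℝ, 0 < lam → ∀ x ∈ Ω, ∀ y ∈ Ω,
      |genDist p₀ lam pPsi x y - ‖x - y‖| ≤ max p₀ B * D / lam) ∧
    (∀ ε : ℝ, 0 < ε → ∃ Λ : ℝ, ∀ lam : ℝ, Λ ≤ lam → ∀ x ∈ Ω, ∀ y ∈ Ω,
      |genDist p₀ lam pPsi x y - ‖x - y‖| < ε) := by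
  have hbound : ∀ lam : ℝ, 0 < lam → ∀ x ∈ Ω, ∀ y ∈ Ω,
      |genDist p₀ lam pPsi x y - ‖x - y‖| ≤ max p₀ B * D / lam := fun lam hlam x hx y hy ↦
    (abs_genDist_sub_norm_le hcont hnonneg hp₀.le hlam hbd x y).trans <|
      div_le_div_of_nonneg_right (mul_le_mul_of_nonneg_left (hD x hx y hy)
        (hp₀.le.trans (le_max_left _ _))) hlam.le
  refine ⟨hbound, fun ε hε ↦ ?_⟩
  have hlim : Tendsto (fun lam ↦ max p₀ B * D / lam) atTop (nhds 0) :=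
    tendsto_id.const_div_atTop _
  obtain ⟨Λ, hΛ⟩ :=
    eventually_atTop.1 ((eventually_gt_atTop 0).and (hlim.eventually (gt_mem_nhds hε)))
  exact ⟨Λ, fun lam hl x hx y hy ↦ (hbound lam (hΛ lam hl).1 x hx y hy).trans_lt (hΛ lam hl).2⟩

/-- if `p_Ψ ≤ B` and `Ω` is a bounded set of diameter at most `D`, then
`sup_{x,y ∈ Ω} |d_λ(x,y) − ‖x − y‖| ≤ max(p₀,B)⬝D/λ`; in particular `d_λ → ‖⬝‖`
uniformly over `Ω` as `λ → ∞`. -/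
theorem genDist_tendsto_euclidean_uniform {n : ℕ} (hn : 1 ≤ n)
    (p₀ : ℝ) (hp₀ : 0 < p₀)
    (pPsi : EuclideanSpace ℝ (Fin n) → ℝ) (hcont : Continuous pPsi)
    (hnonneg : ∀ x, 0 ≤ pPsi x)
    (B : ℝ) (hB : 0 ≤ B) (hbd : ∀ x, pPsi x ≤ B)
    (Ω : Set (EuclideanSpace ℝ (Fin n))) (hΩ : Bornology.IsBounded Ω)
    (D : ℝ) (hD : ∀ x ∈ Ω, ∀ y ∈ Ω, ‖x - y‖ ≤ D) :
    (∀ lam : ℝ, 0 < lam → ∀ x ∈ Ω, ∀ y ∈ Ω,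
      |genDist p₀ lam pPsi x y - ‖x - y‖| ≤ max p₀ B * D / lam) ∧
    (∀ ε : ℝ, 0 < ε → ∃ Λ : ℝ, ∀ lam : ℝ, Λ ≤ lam → ∀ x ∈ Ω, ∀ y ∈ Ω,
      |genDist p₀ lam pPsi x y - ‖x - y‖| < ε) :=
  genDist_tendsto_euclidean_uniform_general p₀ hp₀ pPsi hcont hnonneg B hbd Ω D hD
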